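/- The function s(t) = ŝ·e^{2ŝt/τ}/(e^{2ŝt/τ} - 1 + ŝ/ε), with ŝ > 0, τ > 0, 0 < ε < ŝ, satisfies the differential equation τ·(ds/dt) = 2s(ŝ - s) with initial condition s(0) = ε. -/

import Mathlib

/-!
Writing `k = 2ŝ/τ`, `E = e^{kt}` and `D = E - 1 + c`, the curve `ŝ E / D` is a logistic curve:
its derivative is `k · (ŝE/D) · (c - 1)/D`, and `(c - 1)/D = 1 - E/D = (ŝ - s)/ŝ`.
The condition `c = ŝ/ε ≥ 1` keeps `D > 0` for all times.
-/

open Real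

theorem exp_sub_one_add_pos {c : ℝ} (hc : 1 ≤ c) (x : ℝ) : 0 < exp x - 1 + c := by
  linarith [exp_pos x]

theorem hasDerivAt_logistic (a c k t : ℝ) (hc : 1 ≤ c) :
    HasDerivAt (fun t => a * exp (k * t) / (exp (k * t) - 1 + c))
      (k * (a * exp (k * t) / (exp (k * t) - 1 + c)) *
        (1 - exp (k * t) / (exp (k * t) - 1 + c))) t := by
  have hD := (exp_sub_one_add_pos hc (k * t)).ne'
  have hE : HasDerivAt (fun t => exp (k * t)) (exp (k * t) * k) t := by
    simpa using ((hasDerivAt_id t).const_mul k).exp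
  refine ((hE.const_mul a).div ((hE.sub_const 1).add_const c) hD).congr_deriv ?_
  field_simp

theorem learning_curve_ode_general (shat τ ε : ℝ) (hs : 0 < shat)
    (hε : 0 < ε) (hεs : ε < shat) :
    (fun t : ℝ => shat * Real.exp (2 * shat * t / τ) /
        (Real.exp (2 * shat * t / τ) - 1 + shat / ε)) 0 = ε ∧
    ∀ t : ℝ,
      HasDerivAt (fun t : ℝ => shat * Real.exp (2 * shat * t / τ) /
          (Real.exp (2 * shat * t / τ) - 1 + shat / ε))
        (2 * (shat * Real.exp (2 * shat * t / τ) /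
            (Real.exp (2 * shat * t / τ) - 1 + shat / ε)) *
          (shat - shat * Real.exp (2 * shat * t / τ) /
            (Real.exp (2 * shat * t / τ) - 1 + shat / ε)) / τ) t := by
  have hc : 1 ≤ shat / ε := (one_le_div hε).2 hεs.le
  have hrate : ∀ t : ℝ, 2 * shat * t / τ = 2 * shat / τ * t := fun t => by ring
  simp only [hrate]
  refine ⟨by simp [div_div_cancel₀ hs.ne'], fun t => ?_⟩
  refine (hasDerivAt_logistic shat (shat / ε) (2 * shat / τ) t hc).congr_deriv ?_
  ring

/-- The learning curve `s(t) = ŝ·e^{2ŝt/τ}/(e^{2ŝt/τ} - 1 + ŝ/ε)` satisfies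
`τ·s'(t) = 2·s(t)·(ŝ - s(t))` with `s(0) = ε`. -/
theorem learning_curve_ode (shat τ ε : ℝ) (hs : 0 < shat) (hτ : 0 < τ)
    (hε : 0 < ε) (hεs : ε < shat) :
    (fun t : ℝ => shat * Real.exp (2 * shat * t / τ) /
        (Real.exp (2 * shat * t / τ) - 1 + shat / ε)) 0 = ε ∧
    ∀ t : ℝ,
      HasDerivAt (fun t : ℝ => shat * Real.exp (2 * shat * t / τ) /
          (Real.exp (2 * shat * t / τ) - 1 + shat / ε))
        (2 * (shat * Real.exp (2 * shat * t / τ) /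
            (Real.exp (2 * shat * t / τ) - 1 + shat / ε)) *
          (shat - shat * Real.exp (2 * shat * t / τ) /
            (Real.exp (2 * shat * t / τ) - 1 + shat / ε)) / τ) t :=
  learning_curve_ode_general shat τ ε hs hε hεs
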